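/- Let u be a finite binary word and φ the Thue–Morse morphism. Then: C(φ(u), 0) = |u|; C(φ(u), 01) = |u|_0 + binom(|u|, 2); and C(φ(u), 011) = C(u, 01) + binom(|u|_0, 2) + binom(|u|, 3). -/

import Mathlib

/-- The number of occurrences of `w` as a (scattered) subword of `u`:
the binomial coefficient of the words `u` and `w`. -/
def wordBinom {A : Type*} [DecidableEq A] (u w : List A) : ℕ := u.sublists.count w

/-- `k`-binomial equivalence of finite words: all binomial coefficients with respect to
words of length at most `k` agree. -/
def BinEquiv {A : Type*} [DecidableEq A] (k : ℕ) (u v : List A) : Prop :=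
  ∀ x : List A, x.length ≤ k → wordBinom u x = wordBinom v x

/-- `k`-binomial equivalence as a setoid. -/
def binSetoid (A : Type*) [DecidableEq A] (k : ℕ) : Setoid (List A) where
  r := BinEquiv k
  iseqv := ⟨fun _ _ _ => rfl, fun h x hx => (h x hx).symm,
    fun h h' x hx => (h x hx).trans (h' x hx)⟩

/-- `u` occurs in the infinite word `x` at position `i`. -/
def OccursAt {A : Type*} (u : List A) (x : ℕ → A) (i : ℕ) : Prop :=
  u = (List.range u.length).map (fun j => x (i + j))

/-- `u` is a factor of the infinite word `x`. -/
def FactorOf {A : Type*} (u : List A) (x : ℕ → A) : Prop := ∃ i, OccursAt u x i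

/-- The set of length-`n` factors of `x`. -/
def Fac {A : Type*} (x : ℕ → A) (n : ℕ) : Set (List A) :=
  {u | u.length = n ∧ FactorOf u x}

/-- Factor complexity of an infinite word. -/
noncomputable def fc {A : Type*} (x : ℕ → A) (n : ℕ) : ℕ := (Fac x n).ncard

/-- `k`-binomial complexity of an infinite word: the number of `k`-binomial equivalence
classes of length-`n` factors. -/
noncomputable def bc {A : Type*} [DecidableEq A] (x : ℕ → A) (k n : ℕ) : ℕ :=
  (Quotient.mk (binSetoid A k) '' Fac x n).ncard

/-- The Thue–Morse morphism `φ : 0 ↦ 01, 1 ↦ 10`. -/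
def phi : Fin 2 → List (Fin 2) := fun a => if a = 0 then [0, 1] else [1, 0]

/-- The Thue–Morse morphism applied to a finite word. -/
def phiW : List (Fin 2) → List (Fin 2) := fun u => (u.map phi).flatten

/-- The `k`-th power `φ^k` of the Thue–Morse morphism, on finite words. -/
def phiPow (k : ℕ) : List (Fin 2) → List (Fin 2) := phiW^[k]

/-- `φ^k` applied to an infinite binary word (note `φ^k` is `2^k`-uniform). -/
def phiPowInf (k : ℕ) (y : ℕ → Fin 2) : ℕ → Fin 2 :=
  fun n => (phiPow k [y (n / 2 ^ k)]).getD (n % 2 ^ k) 0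

open Fin.NatCast in
/-- The Thue–Morse word `t = 0110100110010110⋯`, `t n` being the parity of the
binary digit sum of `n`. -/
def thueMorse : ℕ → Fin 2 := fun n => ((Nat.digits 2 n).sum : Fin 2)

/-! Each letter of `u` contributes one `0` and one `1` to `φ(u)`, which gives `C(φ(u), 0) = |u|`
and `C(φ(u), 11) = binom(|u|, 2)`. The other two coefficients then follow by induction on `u`
from the first-letter recursion `C(a v, b w) = C(v, b w) + [a = b] C(v, w)`, since `φ(a u)` is
`01 φ(u)` or `10 φ(u)`. -/

section WordBinom

variable {A : Type*} [DecidableEq A]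

theorem wordBinom_nil_right (u : List A) : wordBinom u [] = 1 := by
  induction u with
  | nil => rfl
  | cons a u ih =>
    have hnil : [] ∉ u.sublists.map (List.cons a) := by simp
    rw [wordBinom, ((List.sublists_cons_perm_append a u).count_eq _), List.count_append,
      List.count_eq_zero.mpr hnil, add_zero]
    exact ih

theorem wordBinom_cons_cons (a b : A) (u w : List A) :
    wordBinom (a :: u) (b :: w) = wordBinom u (b :: w) + if a = b then wordBinom u w else 0 := by
  rw [wordBinom, ((List.sublists_cons_perm_append a u).count_eq _), List.count_append]
  congr 1
  split_ifs with h
  · subst h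
    exact List.count_map_of_injective _ _ List.cons_injective _
  · refine List.count_eq_zero.mpr ?_
    simp only [List.mem_map, not_exists, not_and]
    rintro x - hx
    exact h (List.head_eq_of_cons_eq hx)

theorem wordBinom_replicate (u : List A) (b : A) (n : ℕ) :
    wordBinom u (List.replicate n b) = (u.count b).choose n := by
  induction u generalizing n with
  | nil => cases n <;> rfl
  | cons a u ih =>
    cases n with
    | zero => simp [wordBinom_nil_right]
    | succ n =>
      rw [List.replicate_succ, wordBinom_cons_cons, ← List.replicate_succ, ih, ih, List.count_cons]
      by_cases h : a = b
      · simp [h, Nat.choose_succ_succ', add_comm]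
      · simp [h]

theorem wordBinom_singleton (u : List A) (b : A) : wordBinom u [b] = u.count b := by
  simpa using wordBinom_replicate u b 1

end WordBinom

theorem Fin.two_eq_zero_or_one (a : Fin 2) : a = 0 ∨ a = 1 := by
  fin_cases a <;> simp

theorem count_zero_add_count_one (u : List (Fin 2)) : u.count 0 + u.count 1 = u.length := by
  induction u with
  | nil => rfl
  | cons a u ih => obtain rfl | rfl := Fin.two_eq_zero_or_one a <;> simp <;> omega

theorem phiW_cons (a : Fin 2) (u : List (Fin 2)) : phiW (a :: u) = phi a ++ phiW u := by
  simp [phiW]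

theorem phiW_zero_cons (u : List (Fin 2)) : phiW (0 :: u) = 0 :: 1 :: phiW u :=
  phiW_cons 0 u

theorem phiW_one_cons (u : List (Fin 2)) : phiW (1 :: u) = 1 :: 0 :: phiW u :=
  phiW_cons 1 u

theorem count_phiW (u : List (Fin 2)) (b : Fin 2) : (phiW u).count b = u.length := by
  induction u with
  | nil => rfl
  | cons a u ih =>
    rw [phiW_cons, List.count_append, ih, List.length_cons, add_comm]
    congr 1
    fin_cases a <;> fin_cases b <;> rfl

theorem wordBinom_phiW_zero_one (u : List (Fin 2)) :
    wordBinom (phiW u) [0, 1] = u.count 0 + u.length.choose 2 := by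
  induction u with
  | nil => rfl
  | cons a u ih =>
    obtain rfl | rfl := Fin.two_eq_zero_or_one a <;>
    simp only [phiW_zero_cons, phiW_one_cons, wordBinom_cons_cons, wordBinom_singleton, ih,
      count_phiW, List.count_cons_self, List.count_cons_of_ne one_ne_zero, List.length_cons,
      Nat.choose_succ_succ', Nat.choose_one_right, Nat.reduceAdd, one_ne_zero, ↓reduceIte] <;>
    omega

theorem wordBinom_phiW_zero_one_one (u : List (Fin 2)) :
    wordBinom (phiW u) [0, 1, 1]
      = wordBinom u [0, 1] + (u.count 0).choose 2 + u.length.choose 3 := by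
  have hrep : ∀ w : List (Fin 2), wordBinom w [1, 1] = (w.count 1).choose 2 :=
    fun w => wordBinom_replicate w 1 2
  induction u with
  | nil => rfl
  | cons a u ih =>
    have hcount := count_zero_add_count_one u
    obtain rfl | rfl := Fin.two_eq_zero_or_one a <;>
    simp only [phiW_zero_cons, phiW_one_cons, wordBinom_cons_cons, wordBinom_singleton, hrep, ih,
      count_phiW, List.count_cons_self, List.count_cons_of_ne one_ne_zero, List.length_cons,
      Nat.choose_succ_succ', Nat.choose_one_right, Nat.reduceAdd, one_ne_zero, ↓reduceIte] <;>
    omega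

theorem binomial_coefficients_of_phi_images (u : List (Fin 2)) :
    wordBinom (phiW u) [0] = u.length ∧
    wordBinom (phiW u) [0, 1] = u.count 0 + Nat.choose u.length 2 ∧
    wordBinom (phiW u) [0, 1, 1]
      = wordBinom u [0, 1] + Nat.choose (u.count 0) 2 + Nat.choose u.length 3 :=
  ⟨(wordBinom_singleton _ _).trans (count_phiW u 0), wordBinom_phiW_zero_one u,
    wordBinom_phiW_zero_one_one u⟩
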